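/- If ρ ∈ (u_res)_* is not trace class, then there do not exist ρ₁, ρ₂ ∈ (u_res)_* with iρ₁ ≥ 0, iρ₂ ≥ 0, and ρ = ρ₁ − ρ₂. Hence the predual (u_res)_* is not spanned by its positive cone. -/

import Mathlib

open ContinuousLinearMap

noncomputable section

/-- `T` is a Hilbert–Schmidt operator: `∑ᵢ ‖T eᵢ‖² < ∞` for some Hilbert basis `(eᵢ)`. -/
def IsHS {H : Type*} [NormedAddCommGroup H] [InnerProductSpace ℂ H]
    (T : H →L[ℂ] H) : Prop :=
  ∃ (ι : Type) (b : HilbertBasis ι ℂ H), Summable fun i => ‖T (b i)‖ ^ 2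

/-- `T` is trace class: `T` is a product of two Hilbert–Schmidt operators. -/
def IsTC {H : Type*} [NormedAddCommGroup H] [InnerProductSpace ℂ H]
    (T : H →L[ℂ] H) : Prop :=
  ∃ A B : H →L[ℂ] H, IsHS A ∧ IsHS B ∧ T = A * B

/-- The operator `d = i(p₊ - p₋)` associated to the orthogonal projection `P = p₊`
(so `p₋ = 1 - P`). -/
def dOp {H : Type*} [NormedAddCommGroup H] [InnerProductSpace ℂ H]
    (P : H →L[ℂ] H) : H →L[ℂ] H :=
  Complex.I • (P - (1 - P))

/-!
If `iρ ≥ 0`, write `iρ = S* S`. Then `‖S P x‖² = ⟪P (iρ) P x, x⟫`, so the trace-class diagonal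
blocks `P (iρ) P` and `(1 - P) (iρ) (1 - P)` make `S P` and `S (1 - P)` Hilbert–Schmidt; hence
so is their sum `S`, and `iρ = S* S` is trace class. Trace-class operators, i.e. products of
two Hilbert–Schmidt operators, form a vector space: `A₁ B₁ + A₂ B₂` factors through `H ⊕ H`,
which embeds isometrically into `H` when `H` is infinite-dimensional. So `ρ₁ - ρ₂` is trace class.
-/

open scoped InnerProductSpace

theorem summable_norm_sq_iff_tsum_enorm_sq_ne_top {E ι : Type*} [SeminormedAddCommGroup E]
    (f : ι → E) : (Summable fun i => ‖f i‖ ^ 2) ↔ ∑' i, ‖f i‖ₑ ^ 2 ≠ ⊤ := by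
  simp_rw [enorm_eq_nnnorm, ← ENNReal.coe_pow, ENNReal.tsum_coe_ne_top_iff_summable,
    ← NNReal.summable_coe, NNReal.coe_pow, coe_nnnorm]

section Parseval

variable {𝕜 E ι κ : Type*} [RCLike 𝕜] [NormedAddCommGroup E] [InnerProductSpace 𝕜 E]

theorem HilbertBasis.hasSum_norm_inner_sq (b : HilbertBasis ι 𝕜 E) (x : E) :
    HasSum (fun i => ‖⟪b i, x⟫_𝕜‖ ^ 2) (‖x‖ ^ 2) := by
  simpa [b.repr_apply_apply] using lp.hasSum_norm (p := 2) (by norm_num) (b.repr x)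

theorem HilbertBasis.tsum_enorm_inner_sq (b : HilbertBasis ι 𝕜 E) (x : E) :
    ∑' i, ‖⟪b i, x⟫_𝕜‖ₑ ^ 2 = ‖x‖ₑ ^ 2 := by
  have h := b.hasSum_norm_inner_sq x
  rw [← ofReal_norm, ← ENNReal.ofReal_pow (norm_nonneg _), ← h.tsum_eq,
    ENNReal.ofReal_tsum_of_nonneg (fun _ => by positivity) h.summable]
  simp_rw [ENNReal.ofReal_pow (norm_nonneg _), ofReal_norm]

variable [CompleteSpace E]

theorem tsum_enorm_apply_sq_eq_adjoint (T : E →L[𝕜] E) (b : HilbertBasis ι 𝕜 E)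
    (b' : HilbertBasis κ 𝕜 E) :
    ∑' i, ‖T (b i)‖ₑ ^ 2 = ∑' j, ‖adjoint T (b' j)‖ₑ ^ 2 := calc
  _ = ∑' i, ∑' j, ‖⟪b' j, T (b i)⟫_𝕜‖ₑ ^ 2 := by simp_rw [b'.tsum_enorm_inner_sq]
  _ = ∑' j, ∑' i, ‖⟪b i, adjoint T (b' j)⟫_𝕜‖ₑ ^ 2 := by
    rw [ENNReal.tsum_comm]
    refine tsum_congr fun j => tsum_congr fun i => ?_
    rw [adjoint_inner_right, ← inner_conj_symm, RCLike.enorm_conj]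
  _ = _ := by simp_rw [b.tsum_enorm_inner_sq]

theorem tsum_enorm_apply_sq_eq (T : E →L[𝕜] E) (b : HilbertBasis ι 𝕜 E)
    (b' : HilbertBasis κ 𝕜 E) : ∑' i, ‖T (b i)‖ₑ ^ 2 = ∑' j, ‖T (b' j)‖ₑ ^ 2 := by
  rw [tsum_enorm_apply_sq_eq_adjoint T b b', tsum_enorm_apply_sq_eq_adjoint (adjoint T) b' b',
    adjoint_adjoint]

end Parseval

section HilbertSchmidt

variable {H : Type*} [NormedAddCommGroup H] [InnerProductSpace ℂ H]

theorem IsHS.mul_left {T : H →L[ℂ] H} (h : IsHS T) (C : H →L[ℂ] H) : IsHS (C * T) := by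
  obtain ⟨ι, b, hb⟩ := h
  refine ⟨ι, b, .of_nonneg_of_le (fun i => by positivity) (fun i => ?_) (hb.mul_left (‖C‖ ^ 2))⟩
  calc ‖(C * T) (b i)‖ ^ 2 ≤ (‖C‖ * ‖T (b i)‖) ^ 2 := by gcongr; exact C.le_opNorm _
    _ = ‖C‖ ^ 2 * ‖T (b i)‖ ^ 2 := mul_pow _ _ _

variable [CompleteSpace H]

theorem IsHS.summable {κ : Type*} {T : H →L[ℂ] H} (h : IsHS T) (b : HilbertBasis κ ℂ H) :
    Summable fun i => ‖T (b i)‖ ^ 2 := by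
  obtain ⟨ι, b', hb'⟩ := h
  rw [summable_norm_sq_iff_tsum_enorm_sq_ne_top] at hb' ⊢
  rwa [tsum_enorm_apply_sq_eq T b b']

theorem IsHS.star {T : H →L[ℂ] H} (h : IsHS T) : IsHS (star T) := by
  obtain ⟨ι, b, hb⟩ := h
  refine ⟨ι, b, ?_⟩
  rw [summable_norm_sq_iff_tsum_enorm_sq_ne_top] at hb ⊢
  rwa [star_eq_adjoint, ← tsum_enorm_apply_sq_eq_adjoint]

theorem IsHS.add {S T : H →L[ℂ] H} (hS : IsHS S) (hT : IsHS T) : IsHS (S + T) := by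
  obtain ⟨ι, b, hSb⟩ := hS
  refine ⟨ι, b, .of_nonneg_of_le (fun i => by positivity) (fun i => ?_)
    ((hSb.add (hT.summable b)).mul_left 2)⟩
  calc ‖(S + T) (b i)‖ ^ 2 ≤ (‖S (b i)‖ + ‖T (b i)‖) ^ 2 := by
        gcongr; exact norm_add_le _ _
    _ ≤ 2 * (‖S (b i)‖ ^ 2 + ‖T (b i)‖ ^ 2) := by
        nlinarith [sq_nonneg (‖S (b i)‖ - ‖T (b i)‖)]

theorem IsHS.mul_right {T : H →L[ℂ] H} (h : IsHS T) (C : H →L[ℂ] H) : IsHS (T * C) := by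
  rw [← star_star (T * C), star_mul]
  exact (h.star.mul_left _).star

end HilbertSchmidt

section OrthonormalIsometry

variable {𝕜 ι E : Type*} [RCLike 𝕜] [NormedAddCommGroup E] [InnerProductSpace 𝕜 E]
  [CompleteSpace E] (b : HilbertBasis ι 𝕜 E) {v w : ι → E} (hv : Orthonormal 𝕜 v)
  (hw : Orthonormal 𝕜 w)

/-- The isometry sending the Hilbert basis `b` to the orthonormal family `v`. -/
def HilbertBasis.isometryOfOrthonormal : E →L[𝕜] E :=
  (hv.orthogonalFamily.linearIsometry.comp b.repr.toLinearIsometry).toContinuousLinearMap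

theorem HilbertBasis.hasSum_isometryOfOrthonormal (x : E) :
    HasSum (fun i => b.repr x i • v i) (b.isometryOfOrthonormal hv x) := by
  simpa [isometryOfOrthonormal, LinearIsometry.toSpanSingleton_apply] using
    hv.orthogonalFamily.hasSum_linearIsometry (b.repr x)

theorem HilbertBasis.inner_isometryOfOrthonormal_eq_zero {z : E} (hz : ∀ i, ⟪z, v i⟫_𝕜 = 0)
    (x : E) : ⟪z, b.isometryOfOrthonormal hv x⟫_𝕜 = 0 := by
  refine ((b.hasSum_isometryOfOrthonormal hv x).mapL (innerSL 𝕜 z)).unique ?_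
  simp [hz]

theorem HilbertBasis.adjoint_isometryOfOrthonormal_mul_self :
    adjoint (b.isometryOfOrthonormal hv) * b.isometryOfOrthonormal hv = 1 := by
  ext x
  refine ext_inner_right 𝕜 fun y => ?_
  rw [mul_apply_eq_comp, adjoint_inner_left]
  exact LinearIsometry.inner_map_map _ x y

theorem HilbertBasis.adjoint_isometryOfOrthonormal_mul_eq_zero (hvw : ∀ i j, ⟪v i, w j⟫_𝕜 = 0) :
    adjoint (b.isometryOfOrthonormal hv) * b.isometryOfOrthonormal hw = 0 := by
  ext x
  refine ext_inner_right 𝕜 fun y => ?_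
  rw [mul_apply_eq_comp, adjoint_inner_left, b.inner_isometryOfOrthonormal_eq_zero hv]
  · simp
  · intro i
    rw [← inner_conj_symm, b.inner_isometryOfOrthonormal_eq_zero hw (hvw i), map_zero]

end OrthonormalIsometry

theorem HilbertBasis.exists_isometry_pair {𝕜 ι E : Type*} [RCLike 𝕜] [NormedAddCommGroup E]
    [InnerProductSpace 𝕜 E] [CompleteSpace E] [Infinite ι] (b : HilbertBasis ι 𝕜 E) :
    ∃ u w : E →L[𝕜] E, adjoint u * u = 1 ∧ adjoint w * w = 1 ∧
      adjoint u * w = 0 ∧ adjoint w * u = 0 := by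
  obtain ⟨e⟩ : Nonempty (ι ⊕ ι ≃ ι) := Cardinal.eq.1 (by simp)
  have hv : Orthonormal 𝕜 (b ∘ e ∘ Sum.inl) :=
    b.orthonormal.comp _ (e.injective.comp Sum.inl_injective)
  have hw : Orthonormal 𝕜 (b ∘ e ∘ Sum.inr) :=
    b.orthonormal.comp _ (e.injective.comp Sum.inr_injective)
  exact ⟨_, _, b.adjoint_isometryOfOrthonormal_mul_self hv,
    b.adjoint_isometryOfOrthonormal_mul_self hw,
    b.adjoint_isometryOfOrthonormal_mul_eq_zero hv hw fun _ _ =>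
      b.orthonormal.2 (e.injective.ne Sum.inl_ne_inr),
    b.adjoint_isometryOfOrthonormal_mul_eq_zero hw hv fun _ _ =>
      b.orthonormal.2 (e.injective.ne Sum.inr_ne_inl)⟩

section TraceClass

variable {H : Type*} [NormedAddCommGroup H] [InnerProductSpace ℂ H]

theorem IsTC.smul {T : H →L[ℂ] H} (h : IsTC T) (c : ℂ) : IsTC (c • T) := by
  obtain ⟨A, B, hA, hB, rfl⟩ := h
  exact ⟨c • A, B, by simpa using hA.mul_left (c • 1), hB, (smul_mul_assoc c A B).symm⟩

theorem isTC_smul_iff {T : H →L[ℂ] H} {c : ℂ} (hc : c ≠ 0) : IsTC (c • T) ↔ IsTC T :=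
  ⟨fun h => by simpa [smul_smul, hc] using h.smul c⁻¹, fun h => h.smul c⟩

variable [CompleteSpace H]

theorem IsTC.summable_norm_inner_apply_self {ι : Type*} {M : H →L[ℂ] H} (h : IsTC M)
    (b : HilbertBasis ι ℂ H) : Summable fun i => ‖⟪M (b i), b i⟫_ℂ‖ := by
  obtain ⟨A, B, hA, hB, rfl⟩ := h
  refine .of_nonneg_of_le (fun i => norm_nonneg _) (fun i => ?_)
    (((hB.summable b).add (hA.star.summable b)).mul_left (1 / 2))
  rw [mul_apply_eq_comp, ← adjoint_inner_right, ← star_eq_adjoint]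
  calc ‖⟪B (b i), star A (b i)⟫_ℂ‖ ≤ ‖B (b i)‖ * ‖star A (b i)‖ := norm_inner_le_norm _ _
    _ ≤ 1 / 2 * (‖B (b i)‖ ^ 2 + ‖star A (b i)‖ ^ 2) := by
        nlinarith [sq_nonneg (‖B (b i)‖ - ‖star A (b i)‖)]

theorem isHS_of_isTC_star_mul_self {A : H →L[ℂ] H} (h : IsTC (star A * A)) : IsHS A := by
  have ⟨_, _, ⟨ι, b, _⟩, _⟩ := h
  refine ⟨ι, b, .of_nonneg_of_le (fun i => by positivity) (fun i => ?_)
    (h.summable_norm_inner_apply_self b)⟩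
  calc ‖A (b i)‖ ^ 2 = RCLike.re ⟪(star A * A) (b i), b i⟫_ℂ := by
        rw [star_eq_adjoint, mul_apply_eq_comp, adjoint_inner_left, inner_self_eq_norm_sq]
    _ ≤ _ := RCLike.re_le_norm _

theorem IsTC.of_isPositive {P T : H →L[ℂ] H} (hP : IsSelfAdjoint P) (hT : T.IsPositive)
    (h₁ : IsTC (P * T * P)) (h₂ : IsTC ((1 - P) * T * (1 - P))) : IsTC T := by
  obtain ⟨S, rfl⟩ := CStarAlgebra.nonneg_iff_eq_star_mul_self.1 ((nonneg_iff_isPositive T).2 hT)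
  have hS_mul {Q : H →L[ℂ] H} (hQ : IsSelfAdjoint Q) (h : IsTC (Q * (star S * S) * Q)) :
      IsHS (S * Q) :=
    isHS_of_isTC_star_mul_self (by rwa [star_mul, hQ.star_eq, mul_assoc, ← mul_assoc (star S)])
  have hS : IsHS S := by
    simpa [← mul_add] using (hS_mul hP h₁).add (hS_mul ((IsSelfAdjoint.one _).sub hP) h₂)
  exact ⟨star S, S, hS.star, hS, rfl⟩

theorem IsTC.add {X Y : H →L[ℂ] H} (hX : IsTC X) (hY : IsTC Y) : IsTC (X + Y) := by
  obtain ⟨A₁, B₁, hA₁, hB₁, rfl⟩ := hX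
  obtain ⟨A₂, B₂, hA₂, hB₂, rfl⟩ := hY
  have ⟨ι, b, _⟩ := hA₁
  rcases finite_or_infinite ι with hι | hι
  · have hHS (T : H →L[ℂ] H) : IsHS T := ⟨ι, b, .of_finite⟩
    exact ⟨_, 1, hHS _, hHS 1, (mul_one _).symm⟩
  -- `u` and `w` embed `H ⊕ H` isometrically into `H`, so `A₁ B₁ + A₂ B₂` factors through it.
  obtain ⟨u, w, huu, hww, huw, hwu⟩ := b.exists_isometry_pair
  refine ⟨A₁ * adjoint u + A₂ * adjoint w, u * B₁ + w * B₂,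
    (hA₁.mul_right _).add (hA₂.mul_right _), (hB₁.mul_left u).add (hB₂.mul_left w), ?_⟩
  calc A₁ * B₁ + A₂ * B₂
      = A₁ * (adjoint u * u) * B₁ + A₁ * (adjoint u * w) * B₂
        + A₂ * (adjoint w * u) * B₁ + A₂ * (adjoint w * w) * B₂ := by
        simp [huu, hww, huw, hwu]
    _ = _ := by noncomm_ring

theorem IsTC.sub {X Y : H →L[ℂ] H} (hX : IsTC X) (hY : IsTC Y) : IsTC (X - Y) := by
  simpa [sub_eq_add_neg] using hX.add (hY.smul (-1))

end TraceClass

theorem stmt13_general {H : Type*} [NormedAddCommGroup H] [InnerProductSpace ℂ H] [CompleteSpace H]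
    (P : H →L[ℂ] H) (hP : IsSelfAdjoint P)
    (ρ : H →L[ℂ] H)
    (hnot : ¬ IsTC ρ) :
    ¬ ∃ ρ₁ ρ₂ : H →L[ℂ] H,
        (star ρ₁ = -ρ₁ ∧ IsHS (dOp P * ρ₁ - ρ₁ * dOp P) ∧
          IsTC (P * ρ₁ * P) ∧ IsTC ((1 - P) * ρ₁ * (1 - P))) ∧
        (star ρ₂ = -ρ₂ ∧ IsHS (dOp P * ρ₂ - ρ₂ * dOp P) ∧
          IsTC (P * ρ₂ * P) ∧ IsTC ((1 - P) * ρ₂ * (1 - P))) ∧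
        (Complex.I • ρ₁).IsPositive ∧ (Complex.I • ρ₂).IsPositive ∧
        ρ = ρ₁ - ρ₂ := by
  have isTC_of_isPositive {σ : H →L[ℂ] H} (hσ : (Complex.I • σ).IsPositive)
      (h₁ : IsTC (P * σ * P)) (h₂ : IsTC ((1 - P) * σ * (1 - P))) : IsTC σ := by
    rw [← isTC_smul_iff Complex.I_ne_zero] at h₁ h₂ ⊢
    rw [← smul_mul_assoc, ← mul_smul_comm] at h₁ h₂
    exact .of_isPositive hP hσ h₁ h₂
  rintro ⟨ρ₁, ρ₂, ⟨-, -, h₁, h₁'⟩, ⟨-, -, h₂, h₂'⟩, hpos₁, hpos₂, rfl⟩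
  exact hnot ((isTC_of_isPositive hpos₁ h₁ h₁').sub (isTC_of_isPositive hpos₂ h₂ h₂'))

/-- If `ρ ∈ (u_res)_*` is not trace class, then it is not a difference of two elements of
`(u_res)_*` with positive `i⋅(⋅)`: the predual is not spanned by its positive cone. -/
theorem stmt13 {H : Type*} [NormedAddCommGroup H] [InnerProductSpace ℂ H] [CompleteSpace H]
    (P : H →L[ℂ] H) (hP : IsSelfAdjoint P) (hP2 : P * P = P)
    (ρ : H →L[ℂ] H)
    (hρ1 : star ρ = -ρ) (hρ2 : IsHS (dOp P * ρ - ρ * dOp P))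
    (hρ3 : IsTC (P * ρ * P)) (hρ4 : IsTC ((1 - P) * ρ * (1 - P)))
    (hnot : ¬ IsTC ρ) :
    ¬ ∃ ρ₁ ρ₂ : H →L[ℂ] H,
        (star ρ₁ = -ρ₁ ∧ IsHS (dOp P * ρ₁ - ρ₁ * dOp P) ∧
          IsTC (P * ρ₁ * P) ∧ IsTC ((1 - P) * ρ₁ * (1 - P))) ∧
        (star ρ₂ = -ρ₂ ∧ IsHS (dOp P * ρ₂ - ρ₂ * dOp P) ∧
          IsTC (P * ρ₂ * P) ∧ IsTC ((1 - P) * ρ₂ * (1 - P))) ∧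
        (Complex.I • ρ₁).IsPositive ∧ (Complex.I • ρ₂).IsPositive ∧
        ρ = ρ₁ - ρ₂ :=
  stmt13_general P hP ρ hnot
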